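/- arXiv:math/0601211 — 3 statements merged into one kernel-verified Lean document; each statement's English description precedes it below -/
import Mathlib

section
/- Let N be a positive integer and f : ZMod N → ℂ with |f(n)| ≤ 1 for all n. Define ‖f‖_{U²}⁴ = (1/N³) ∑_{x00+x11=x01+x10} f(x00) f(x01) conj(f(x10)) conj(f(x11)) and f̂(θ) = (1/N) ∑_n f(n) e(-2πi n θ / N). If ‖f‖_{U²} ≥ δ for some δ > 0, then there exists θ ∈ ZMod N with |f̂(θ)| ≥ δ². -/
/-!
Let `k(s) = ∑_b f(s + b) f(b)`. Grouping the additive quadruples `a + d = b + c` by the common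
difference `s = a - b = c - d` turns the `U²` sum into `∑_s |k(s)|²`, and `k̂(θ) = f̂(θ) f̂(-θ)`
for the unnormalised transform `f̂ = 𝓕 f`. Parseval, applied first to `k` and then to `f`, gives
`N ∑_s |k(s)|² = ∑_θ |f̂(θ)|² |f̂(-θ)|² ≤ (max_θ |f̂(θ)|²) · N ∑_n |f(n)|² ≤ (max_θ |f̂(θ)|²) · N²`.
-/

open Finset Complex
open scoped ComplexConjugate

def diffConv {G R : Type*} [AddCommGroup G] [Fintype G] [NonUnitalNonAssocSemiring R]
    (f g : G → R) (s : G) : R :=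
  ∑ b, f (s + b) * g b

lemma sum_additiveQuadruples_eq_sum_diffConv_mul_conj {G : Type*} [AddCommGroup G] [Fintype G]
    [DecidableEq G] (f : G → ℂ) :
    ∑ x ∈ univ.filter (fun x : G × G × G × G => x.1 + x.2.2.2 = x.2.1 + x.2.2.1),
        f x.1 * f x.2.1 * conj (f x.2.2.1) * conj (f x.2.2.2) =
      ∑ s, diffConv f f s * conj (diffConv f f s) := by
  simp_rw [diffConv, map_sum, map_mul, sum_mul_sum, ← Fintype.sum_prod_type']
  symm
  refine sum_nbij' (fun y => (y.1 + y.2.1, y.2.1, y.1 + y.2.2, y.2.2))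
    (fun x => (x.1 - x.2.1, x.2.1, x.2.2.2)) ?_ ?_ ?_ ?_ ?_
  · intro y _
    simp only [mem_filter, mem_univ, true_and]
    abel
  · simp
  · simp
  · intro x hx
    simp only [mem_filter, mem_univ, true_and] at hx
    ext <;> simp only [sub_add_cancel]
    rw [sub_add_eq_add_sub, hx, add_sub_cancel_left]
  · intro y _
    ring

namespace ZMod

variable {N : ℕ} [NeZero N]

lemma exp_neg_val_mul_val_eq_stdAddChar (n θ : ZMod N) :
    Complex.exp (-(2 * Real.pi * Complex.I * (n.val : ℂ) * (θ.val : ℂ) / N)) =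
      stdAddChar (-(n * θ)) := by
  have hcast : (-(n * θ) : ZMod N) = ((-(n.val * θ.val : ℤ) : ℤ) : ZMod N) := by
    push_cast
    rw [natCast_val, natCast_val, cast_id, cast_id]
  rw [hcast, stdAddChar_coe]
  congr 1
  push_cast
  ring

lemma conj_stdAddChar (x : ZMod N) : conj (stdAddChar x) = stdAddChar (-x) :=
  AddChar.starComp_apply (by simp [ringChar_zmod_n, Nat.pos_of_ne_zero (NeZero.ne N)]) x

lemma conj_dft_apply (Φ : ZMod N → ℂ) (k : ZMod N) :
    conj (𝓕 Φ k) = ∑ j, stdAddChar (j * k) * conj (Φ j) := by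
  simp [dft_apply, map_sum, conj_stdAddChar]

lemma sum_stdAddChar_mul_dft (Φ : ZMod N → ℂ) (j : ZMod N) :
    ∑ k, stdAddChar (j * k) * 𝓕 Φ k = N * Φ j := by
  have h := invDFT_apply (𝓕 Φ) j
  simp only [LinearEquiv.symm_apply_apply, smul_eq_mul] at h
  rw [h, ← mul_assoc, mul_inv_cancel₀ (NeZero.ne _), one_mul]
  simp_rw [mul_comm j]

lemma sum_dft_mul_conj_dft (Φ Ψ : ZMod N → ℂ) :
    ∑ k, 𝓕 Φ k * conj (𝓕 Ψ k) = N * ∑ j, Φ j * conj (Ψ j) := by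
  calc ∑ k, 𝓕 Φ k * conj (𝓕 Ψ k)
      = ∑ j, (∑ k, stdAddChar (j * k) * 𝓕 Φ k) * conj (Ψ j) := by
        simp_rw [conj_dft_apply, mul_sum, sum_mul]
        rw [Finset.sum_comm]
        exact sum_congr rfl fun _ _ => sum_congr rfl fun _ _ => by ring
    _ = N * ∑ j, Φ j * conj (Ψ j) := by
        simp_rw [sum_stdAddChar_mul_dft, mul_sum, mul_assoc]

lemma sum_norm_sq_dft (Φ : ZMod N → ℂ) : ∑ k, ‖𝓕 Φ k‖ ^ 2 = N * ∑ j, ‖Φ j‖ ^ 2 := by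
  have h := sum_dft_mul_conj_dft Φ Φ
  simp_rw [mul_conj'] at h
  exact_mod_cast h

lemma dft_diffConv (Φ Ψ : ZMod N → ℂ) (k : ZMod N) :
    𝓕 (diffConv Φ Ψ) k = 𝓕 Φ k * 𝓕 Ψ (-k) := by
  simp only [dft_apply, diffConv, smul_eq_mul, mul_sum, sum_mul]
  rw [Finset.sum_comm]
  refine sum_congr rfl fun b _ => ?_
  rw [← Equiv.sum_comp (Equiv.subRight b)]
  refine sum_congr rfl fun a _ => ?_
  rw [Equiv.subRight_apply, sub_add_cancel,
    show -((a - b) * k) = -(a * k) + -(b * -k) by ring, AddChar.map_add_eq_mul]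
  ring

lemma sum_norm_sq_diffConv_le (Φ : ZMod N → ℂ) {M : ℝ} (hM : ∀ k, ‖𝓕 Φ k‖ ≤ M) :
    ∑ s, ‖diffConv Φ Φ s‖ ^ 2 ≤ M ^ 2 * ∑ j, ‖Φ j‖ ^ 2 := by
  have hN : (0 : ℝ) < N := Nat.cast_pos.mpr (Nat.pos_of_ne_zero (NeZero.ne N))
  refine le_of_mul_le_mul_left ?_ hN
  calc N * ∑ s, ‖diffConv Φ Φ s‖ ^ 2
      = ∑ k, ‖𝓕 Φ (-k)‖ ^ 2 * ‖𝓕 Φ k‖ ^ 2 := by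
        simp only [← sum_norm_sq_dft, dft_diffConv, norm_mul, mul_pow, mul_comm]
    _ ≤ ∑ k, M ^ 2 * ‖𝓕 Φ k‖ ^ 2 := by
        gcongr with k
        exact hM (-k)
    _ = N * (M ^ 2 * ∑ j, ‖Φ j‖ ^ 2) := by
        rw [← mul_sum, sum_norm_sq_dft]
        ring

end ZMod

open ZMod in
theorem stmt_3_general (N : ℕ) [NeZero N] (f : ZMod N → ℂ) (hf : ∀ n, ‖f n‖ ≤ 1)
    (F : ZMod N → ℂ)
    (hF : ∀ θ : ZMod N, F θ =
      (N : ℂ)⁻¹ * ∑ n : ZMod N,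
        f n * Complex.exp (-(2 * Real.pi * Complex.I * (n.val : ℂ) * (θ.val : ℂ) / N)))
    (δ : ℝ)
    (hU : δ ^ 4 ≤ ‖((N : ℂ) ^ 3)⁻¹ *
      ∑ x ∈ Finset.univ.filter
          (fun x : ZMod N × ZMod N × ZMod N × ZMod N => x.1 + x.2.2.2 = x.2.1 + x.2.2.1),
        f x.1 * f x.2.1 * (starRingEnd ℂ) (f x.2.2.1) * (starRingEnd ℂ) (f x.2.2.2)‖) :
    ∃ θ : ZMod N, δ ^ 2 ≤ ‖F θ‖ := by
  have hF_dft : ∀ θ, ‖F θ‖ = (N : ℝ)⁻¹ * ‖𝓕 f θ‖ := fun θ => by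
    simp only [hF, dft_apply, smul_eq_mul, exp_neg_val_mul_val_eq_stdAddChar, mul_comm (f _),
      norm_mul, norm_inv, norm_natCast]
  obtain ⟨θ₀, hθ₀⟩ := Finite.exists_max fun θ => ‖𝓕 f θ‖
  have hf_l2 : ∑ n, ‖f n‖ ^ 2 ≤ N := by
    calc ∑ n, ‖f n‖ ^ 2 ≤ ∑ _n : ZMod N, (1 : ℝ) :=
          sum_le_sum fun n _ => pow_le_one₀ (norm_nonneg _) (hf n)
      _ = N := by simp
  have hU' : δ ^ 4 ≤ ((N : ℝ) ^ 3)⁻¹ * ∑ s, ‖diffConv f f s‖ ^ 2 := by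
    simpa only [sum_additiveQuadruples_eq_sum_diffConv_mul_conj, mul_conj', ← ofReal_pow,
      ← ofReal_sum, norm_mul, norm_inv, norm_pow, norm_natCast, norm_real,
      Real.norm_of_nonneg (sum_nonneg fun _ _ => sq_nonneg _)] using hU
  refine ⟨θ₀, le_of_pow_le_pow_left₀ two_ne_zero (norm_nonneg _) ?_⟩
  calc (δ ^ 2) ^ 2 = δ ^ 4 := by ring
    _ ≤ ((N : ℝ) ^ 3)⁻¹ * (‖𝓕 f θ₀‖ ^ 2 * N) := hU'.trans (by
        gcongr
        exact (sum_norm_sq_diffConv_le f hθ₀).trans (by gcongr))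
    _ = ‖F θ₀‖ ^ 2 := by
        rw [hF_dft]
        field_simp

theorem stmt_3 (N : ℕ) [NeZero N] (f : ZMod N → ℂ) (hf : ∀ n, ‖f n‖ ≤ 1)
    (F : ZMod N → ℂ)
    (hF : ∀ θ : ZMod N, F θ =
      (N : ℂ)⁻¹ * ∑ n : ZMod N,
        f n * Complex.exp (-(2 * Real.pi * Complex.I * (n.val : ℂ) * (θ.val : ℂ) / N)))
    (δ : ℝ) (hδ : 0 < δ)
    (hU : δ ^ 4 ≤ ‖((N : ℂ) ^ 3)⁻¹ *
      ∑ x ∈ Finset.univ.filter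
          (fun x : ZMod N × ZMod N × ZMod N × ZMod N => x.1 + x.2.2.2 = x.2.1 + x.2.2.1),
        f x.1 * f x.2.1 * (starRingEnd ℂ) (f x.2.2.1) * (starRingEnd ℂ) (f x.2.2.2)‖) :
    ∃ θ : ZMod N, δ ^ 2 ≤ ‖F θ‖ :=
  stmt_3_general N f hf F hF δ hU
end

section
/- Let N be a positive integer with N odd, and let A ⊆ ZMod N with |A| = α N. Write f_A = 1_A - α for the balanced function of A. If |(1/N²) ∑_{x1-2x2+x3=0} 1_A(x1) 1_A(x2) 1_A(x3) - α³| ≥ δ, then there exists θ ∈ ZMod N with |(1/N) ∑_n f_A(n) e(2πi n θ / N)| ≥ δ/7. -/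
/-!
Write `1_A = f + α` with `f` the balanced function, so `∑ f = 0`. Since `2` is invertible,
`y ↦ 2y - x` is a bijection, as is `x ↦ 2y - x`; hence in the expansion of
`Λ(f + α) = ∑_{x,y} (f+α)(x) (f+α)(y) (f+α)(2y-x)` every term containing `f` at most twice
vanishes, and `Λ(1_A) = Λ(f) + α³N²`. Orthogonality of characters gives
`N Λ(f) = ∑_θ f̂(θ)² f̂(-2θ)`, so by Parseval
`N |Λ(f)| ≤ max |f̂| ∑_θ |f̂(θ)|² = N max |f̂| ∑ |f|² ≤ N² max |f̂|`,
i.e. `δ ≤ max_θ |f̂(θ)| / N`.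
-/

open Finset Complex ComplexConjugate

namespace ThreeAP

variable {R : Type*} [CommRing R] [Fintype R]

def threeAPSum {S : Type*} [CommSemiring S] (f : R → S) : S :=
  ∑ x, ∑ y, f x * f y * f (2 * y - x)

section Balanced

variable {ι : Type*} [Fintype ι] [DecidableEq ι]

noncomputable def balancedFun (A : Finset ι) (n : ι) : ℝ :=
  (if n ∈ A then 1 else 0) - #A / Fintype.card ι

lemma sum_balancedFun (A : Finset ι) : ∑ n, balancedFun A n = 0 := by
  rcases isEmpty_or_nonempty ι with hι | hι
  · simp
  · have hcard : (Fintype.card ι : ℝ) ≠ 0 := Nat.cast_ne_zero.2 Fintype.card_ne_zero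
    simp [balancedFun, sum_sub_distrib, mul_div_cancel₀ _ hcard]

lemma sum_balancedFun_sq_le [Nonempty ι] (A : Finset ι) :
    ∑ n, balancedFun A n ^ 2 ≤ Fintype.card ι := by
  set α : ℝ := #A / Fintype.card ι
  have hcard : (0 : ℝ) < Fintype.card ι := Nat.cast_pos.2 Fintype.card_pos
  have hA : (#A : ℝ) = α * Fintype.card ι := (div_mul_cancel₀ _ hcard.ne').symm
  have hsq : ∀ n, balancedFun A n ^ 2 = (1 - 2 * α) * (if n ∈ A then 1 else 0) + α ^ 2 :=
    fun n => by simp only [balancedFun, α]; split_ifs <;> ring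
  simp only [hsq, sum_add_distrib, ← mul_sum, sum_boole, sum_const, card_univ, nsmul_eq_mul,
    filter_mem_eq_inter, univ_inter, hA]
  nlinarith [mul_nonneg hcard.le (sq_nonneg (α - 1 / 2))]

end Balanced

section Counting

lemma sum_filter_eq_threeAPSum [DecidableEq R] {S : Type*} [CommSemiring S] (g : R → S) :
    ∑ x ∈ univ.filter (fun x : R × R × R => x.1 - 2 * x.2.1 + x.2.2 = 0),
      g x.1 * g x.2.1 * g x.2.2 = threeAPSum g := by
  simp_rw [sum_filter, Fintype.sum_prod_type, add_eq_zero_iff_eq_neg', neg_sub, sum_ite_eq',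
    mem_univ, if_true, threeAPSum]

variable {S : Type*}

lemma sum_comp_two_mul_sub [AddCommMonoid S] (h2 : IsUnit (2 : R)) (f : R → S) (x : R) :
    ∑ y, f (2 * y - x) = ∑ y, f y :=
  Fintype.sum_equiv ((Units.mulLeft h2.unit).trans (Equiv.subRight x)) _ _ fun _ => rfl

lemma sum_comp_sub_left [AddCommMonoid S] (f : R → S) (a : R) :
    ∑ x, f (a - x) = ∑ x, f x :=
  Fintype.sum_equiv (Equiv.subLeft a) _ _ fun _ => rfl

lemma threeAPSum_add_const [CommRing S] (h2 : IsUnit (2 : R)) {f : R → S}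
    (hf : ∑ x, f x = 0) (c : S) :
    threeAPSum (fun x => f x + c) = threeAPSum f + Fintype.card R ^ 2 * c ^ 3 := by
  have hexpand : ∀ x y, (f x + c) * (f y + c) * (f (2 * y - x) + c) =
      f x * f y * f (2 * y - x) + c * (f x * f y) + c * (f x * f (2 * y - x))
        + c * (f y * f (2 * y - x)) + c ^ 2 * f x + c ^ 2 * f y + c ^ 2 * f (2 * y - x) + c ^ 3 :=
    fun x y => by ring
  have hmixed : ∑ x, ∑ y, f y * f (2 * y - x) = 0 := by
    rw [sum_comm]; simp_rw [← mul_sum, sum_comp_sub_left, hf, mul_zero, sum_const_zero]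
  simp_rw [threeAPSum, hexpand, sum_add_distrib, ← mul_sum, hmixed, sum_comp_two_mul_sub h2, hf]
  simp only [mul_zero, sum_const_zero, add_zero, sum_const, card_univ, nsmul_eq_mul, ← mul_sum,
    hf, add_right_inj]
  ring

lemma threeAPSum_indicator [DecidableEq R] (h2 : IsUnit (2 : R)) (A : Finset R) :
    threeAPSum (fun n => if n ∈ A then (1 : ℝ) else 0) =
      threeAPSum (balancedFun A) + Fintype.card R ^ 2 * (#A / Fintype.card R) ^ 3 := by
  have hsplit : (fun n => if n ∈ A then (1 : ℝ) else 0) =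
      fun n => balancedFun A n + #A / Fintype.card R := by
    ext n; simp [balancedFun]
  rw [hsplit, threeAPSum_add_const h2 (sum_balancedFun A)]

lemma map_threeAPSum {S T : Type*} [CommSemiring S] [CommSemiring T] (φ : S →+* T)
    (f : R → S) :
    φ (threeAPSum f) = threeAPSum (fun x => φ (f x)) := by
  simp only [threeAPSum, map_sum, map_mul]

end Counting

section Fourier

/-- The sign is that of the exponential sum in the theorem, opposite to `ZMod.dft`. -/
def fourierSum (ψ : AddChar R ℂ) (f : R → ℂ) (θ : R) : ℂ :=
  ∑ n, f n * ψ (n * θ)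

variable [DecidableEq R] {ψ : AddChar R ℂ}

lemma sum_fourierSum_mul_conj (hψ : ψ.IsPrimitive) (f : R → ℂ) :
    ∑ θ, fourierSum ψ f θ * conj (fourierSum ψ f θ) =
      Fintype.card R * ∑ n, f n * conj (f n) := by
  have hexpand : ∀ θ, fourierSum ψ f θ * conj (fourierSum ψ f θ) =
      ∑ a, ∑ b, f a * conj (f b) * ψ (θ * (a - b)) := fun θ => by
    simp only [fourierSum, map_sum, map_mul, ← AddChar.map_neg_eq_conj, sum_mul_sum]
    refine sum_congr rfl fun a _ => sum_congr rfl fun b _ => ?_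
    rw [show θ * (a - b) = a * θ + -(b * θ) by ring, AddChar.map_add_eq_mul]
    ring
  calc _ = ∑ a, ∑ b, ∑ θ, f a * conj (f b) * ψ (θ * (a - b)) := by
        simp_rw [hexpand]; rw [sum_comm]; exact sum_congr rfl fun a _ => sum_comm
    _ = ∑ a, Fintype.card R * (f a * conj (f a)) := sum_congr rfl fun a _ => by
        simp_rw [← mul_sum, AddChar.sum_mulShift _ hψ, Nat.cast_ite, Nat.cast_zero, mul_ite,
          mul_zero, sub_eq_zero, sum_ite_eq, mem_univ, if_true, mul_comm]
    _ = _ := (mul_sum ..).symm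

lemma sum_norm_fourierSum_sq (hψ : ψ.IsPrimitive) (f : R → ℂ) :
    ∑ θ, ‖fourierSum ψ f θ‖ ^ 2 = Fintype.card R * ∑ n, ‖f n‖ ^ 2 := by
  have := sum_fourierSum_mul_conj hψ f
  simp_rw [mul_conj'] at this
  exact_mod_cast this

lemma sum_fourierSum_sq_mul (hψ : ψ.IsPrimitive) (f : R → ℂ) :
    ∑ θ, fourierSum ψ f θ ^ 2 * fourierSum ψ f (-(2 * θ)) =
      Fintype.card R * threeAPSum f := by
  have hexpand : ∀ θ, fourierSum ψ f θ ^ 2 * fourierSum ψ f (-(2 * θ)) =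
      ∑ a, ∑ b, ∑ d, f a * f b * f d * ψ (θ * (a + b - 2 * d)) := fun θ => by
    rw [fourierSum, fourierSum, sq, sum_mul_sum]
    simp_rw [sum_mul, mul_sum]
    refine sum_congr rfl fun a _ => sum_congr rfl fun b _ => sum_congr rfl fun d _ => ?_
    rw [show θ * (a + b - 2 * d) = a * θ + b * θ + d * -(2 * θ) by ring,
      AddChar.map_add_eq_mul, AddChar.map_add_eq_mul]
    ring
  calc _ = ∑ a, ∑ d, ∑ b, ∑ θ, f a * f b * f d * ψ (θ * (a + b - 2 * d)) := by
        simp_rw [hexpand]; rw [sum_comm]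
        exact sum_congr rfl fun a _ => (sum_congr rfl fun _ _ => sum_comm).trans
          (sum_comm.trans (sum_congr rfl fun _ _ => sum_comm))
    _ = ∑ a, ∑ d, Fintype.card R * (f a * f d * f (2 * d - a)) :=
        sum_congr rfl fun a _ => sum_congr rfl fun d _ => by
          simp_rw [← mul_sum, AddChar.sum_mulShift _ hψ, Nat.cast_ite, Nat.cast_zero, mul_ite,
            mul_zero, sub_eq_zero, ← eq_sub_iff_add_eq', sum_ite_eq', mem_univ, if_true]
          ring
    _ = _ := by simp_rw [threeAPSum, mul_sum]

lemma norm_sum_sq_mul_le {ι : Type*} [Fintype ι] (c : ι → ℂ) (e : ι → ι) {M : ℝ}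
    (hM : ∀ i, ‖c i‖ ≤ M) : ‖∑ i, c i ^ 2 * c (e i)‖ ≤ M * ∑ i, ‖c i‖ ^ 2 :=
  calc ‖∑ i, c i ^ 2 * c (e i)‖ ≤ ∑ i, ‖c i‖ ^ 2 * ‖c (e i)‖ :=
        (norm_sum_le _ _).trans_eq (by simp only [norm_mul, norm_pow])
    _ ≤ ∑ i, ‖c i‖ ^ 2 * M :=
        sum_le_sum fun i _ => mul_le_mul_of_nonneg_left (hM _) (sq_nonneg _)
    _ = M * ∑ i, ‖c i‖ ^ 2 := by rw [mul_sum]; simp_rw [mul_comm]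

lemma norm_threeAPSum_le (hψ : ψ.IsPrimitive) (f : R → ℂ) {M : ℝ}
    (hM : ∀ θ, ‖fourierSum ψ f θ‖ ≤ M) :
    ‖threeAPSum f‖ ≤ M * ∑ n, ‖f n‖ ^ 2 := by
  have hcard : (0 : ℝ) < Fintype.card R := Nat.cast_pos.2 Fintype.card_pos
  have := norm_sum_sq_mul_le _ (fun θ => -(2 * θ)) hM
  rw [sum_fourierSum_sq_mul hψ, sum_norm_fourierSum_sq hψ, norm_mul, norm_natCast,
    mul_left_comm] at this
  exact le_of_mul_le_mul_left this hcard

lemma abs_threeAPSum_balancedFun_le (hψ : ψ.IsPrimitive) (A : Finset R) {M : ℝ}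
    (hM : ∀ θ, ‖fourierSum ψ (fun n => (balancedFun A n : ℂ)) θ‖ ≤ M) :
    |threeAPSum (balancedFun A)| ≤ M * Fintype.card R := by
  have h := norm_threeAPSum_le hψ _ hM
  have hcast : threeAPSum (fun n => (balancedFun A n : ℂ)) = threeAPSum (balancedFun A) :=
    (map_threeAPSum ofRealHom _).symm
  simp only [hcast, norm_real, Real.norm_eq_abs, sq_abs] at h
  exact h.trans <|
    mul_le_mul_of_nonneg_left (sum_balancedFun_sq_le A) ((norm_nonneg _).trans (hM 0))

end Fourier

end ThreeAP

open ThreeAP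

lemma ZMod.exp_val_mul_val {N : ℕ} [NeZero N] (n θ : ZMod N) :
    Complex.exp (2 * Real.pi * Complex.I * (n.val : ℂ) * (θ.val : ℂ) / N) =
      ZMod.stdAddChar (n * θ) := by
  have h : n * θ = ((n.val * θ.val : ℕ) : ℤ) := by
    push_cast [ZMod.natCast_zmod_val]; ring
  rw [h, ZMod.stdAddChar_coe]
  push_cast
  ring_nf

theorem stmt_5 (N : ℕ) [NeZero N] (hodd : Odd N) (A : Finset (ZMod N)) (α δ : ℝ)
    (hα : α = (A.card : ℝ) / N)
    (h : δ ≤ |((N : ℝ) ^ 2)⁻¹ *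
      (∑ x ∈ Finset.univ.filter
          (fun x : ZMod N × ZMod N × ZMod N => x.1 - 2 * x.2.1 + x.2.2 = 0),
        (if x.1 ∈ A then (1 : ℝ) else 0) * (if x.2.1 ∈ A then (1 : ℝ) else 0) *
          (if x.2.2 ∈ A then (1 : ℝ) else 0)) - α ^ 3|) :
    ∃ θ : ZMod N, δ / 7 ≤ ‖(N : ℂ)⁻¹ *
      ∑ n : ZMod N, ((if n ∈ A then (1 : ℂ) else 0) - (α : ℂ)) *
        Complex.exp (2 * Real.pi * Complex.I * (n.val : ℂ) * (θ.val : ℂ) / N)‖ := by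
  subst hα
  have hN : (0 : ℝ) < N := Nat.cast_pos.2 (NeZero.pos N)
  have h2 : IsUnit (2 : ZMod N) := by
    simpa using (ZMod.isUnit_iff_coprime 2 N).2 hodd.coprime_two_left
  set c := fourierSum ZMod.stdAddChar (fun n => (balancedFun A n : ℂ))
  obtain ⟨θ, -, hθ⟩ := exists_max_image univ (fun θ => ‖c θ‖) univ_nonempty
  have hΛ := abs_threeAPSum_balancedFun_le (ZMod.isPrimitive_stdAddChar N) A
    (fun θ' => hθ θ' (mem_univ _))
  rw [sum_filter_eq_threeAPSum (fun n => if n ∈ A then (1 : ℝ) else 0), threeAPSum_indicator h2,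
    ZMod.card, mul_add, inv_mul_cancel_left₀ (by positivity), add_sub_cancel_right, abs_mul,
    abs_of_pos (by positivity)] at h
  have hδ : δ ≤ (N : ℝ)⁻¹ * ‖c θ‖ := calc
    δ ≤ ((N : ℝ) ^ 2)⁻¹ * |threeAPSum (balancedFun A)| := h
    _ ≤ ((N : ℝ) ^ 2)⁻¹ * (‖c θ‖ * N) := by gcongr; simpa only [ZMod.card] using hΛ
    _ = (N : ℝ)⁻¹ * ‖c θ‖ := by field_simp
  refine ⟨θ, ?_⟩
  have hc : ∑ n : ZMod N, ((if n ∈ A then (1 : ℂ) else 0) - ((#A / N : ℝ) : ℂ)) *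
      Complex.exp (2 * Real.pi * Complex.I * (n.val : ℂ) * (θ.val : ℂ) / N) = c θ := by
    simp_rw [ZMod.exp_val_mul_val]
    simp [c, fourierSum, balancedFun, apply_ite]
  rw [hc, norm_mul, norm_inv, Complex.norm_natCast]
  linarith [mul_nonneg (inv_nonneg.2 hN.le) (norm_nonneg (c θ))]
end

section
/- Let k ≥ 3 and let A be the (k-2) × k matrix over ℚ with rows r_i given by r_i(i)=1, r_i(i+1)=-2, r_i(i+2)=1, other entries 0. Then every nonzero vector in the row span of A over ℚ has at least three nonzero entries. -/
open Matrix Finset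

theorem stmt_17 (k : ℕ) (hk : 3 ≤ k) (A : Matrix (Fin (k - 2)) (Fin k) ℚ)
    (hA : ∀ (i : Fin (k - 2)) (j : Fin k),
      A i j = if (j : ℕ) = (i : ℕ) then 1
        else if (j : ℕ) = (i : ℕ) + 1 then -2
        else if (j : ℕ) = (i : ℕ) + 2 then 1 else 0)
    (c : Fin (k - 2) → ℚ) (hc : c ≠ 0) :
    3 ≤ (Finset.univ.filter (fun j : Fin k => (∑ i, c i * A i j) ≠ 0)).card := by
  have sumInd : ∀ (m : ℕ) (hm : m < k) (f : Fin k → ℚ),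
      ∑ j : Fin k, (if (j : ℕ) = m then f j else 0) = f ⟨m, hm⟩ := by
    intro m hm f
    rw [Finset.sum_eq_single_of_mem ⟨m, hm⟩ (Finset.mem_univ _)]
    · simp
    · intro i _ hne
      exact if_neg fun h => hne (Fin.ext h)
  have hbound : ∀ i : Fin (k - 2), (i : ℕ) + 2 < k := by
    intro i; have := i.isLt; omega
  have hdecomp : ∀ (i : Fin (k - 2)) (j : Fin k),
      A i j = (if (j : ℕ) = (i : ℕ) then (1:ℚ) else 0)
        + (if (j : ℕ) = (i : ℕ) + 1 then (-2:ℚ) else 0)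
        + (if (j : ℕ) = (i : ℕ) + 2 then (1:ℚ) else 0) := by
    intro i j
    rw [hA]
    split_ifs <;> first | omega | norm_num
  have rowsum0 : ∀ i : Fin (k - 2), ∑ j : Fin k, A i j = 0 := by
    intro i
    simp_rw [hdecomp i, Finset.sum_add_distrib]
    rw [sumInd _ (by have := hbound i; omega) (fun _ => (1:ℚ)),
        sumInd _ (by have := hbound i; omega) (fun _ => (-2:ℚ)),
        sumInd _ (hbound i) (fun _ => (1:ℚ))]
    norm_num
  have rowsum1 : ∀ i : Fin (k - 2), ∑ j : Fin k, ((j : ℕ) : ℚ) * A i j = 0 := by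
    intro i
    simp_rw [hdecomp i, mul_add, mul_ite, mul_zero, Finset.sum_add_distrib]
    rw [sumInd _ (by have := hbound i; omega) (fun j => ((j:ℕ):ℚ) * 1),
        sumInd _ (by have := hbound i; omega) (fun j => ((j:ℕ):ℚ) * (-2)),
        sumInd _ (hbound i) (fun j => ((j:ℕ):ℚ) * 1)]
    push_cast
    ring
  set v : Fin k → ℚ := fun j => ∑ i, c i * A i j with hv
  have S0 : ∑ j, v j = 0 := by
    simp only [hv]
    rw [Finset.sum_comm]
    simp_rw [← Finset.mul_sum, rowsum0, mul_zero, Finset.sum_const_zero]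
  have S1 : ∑ j : Fin k, ((j : ℕ) : ℚ) * v j = 0 := by
    simp only [hv]
    simp_rw [Finset.mul_sum]
    rw [Finset.sum_comm]
    simp_rw [mul_left_comm, ← Finset.mul_sum, rowsum1, mul_zero, Finset.sum_const_zero]
  -- support of c
  have hcex : ∃ i, c i ≠ 0 := Function.ne_iff.mp hc
  set sc : Finset (Fin (k - 2)) := Finset.univ.filter (fun i => c i ≠ 0) with hsc
  have hscne : sc.Nonempty := by
    obtain ⟨i, hi⟩ := hcex
    exact ⟨i, Finset.mem_filter.mpr ⟨Finset.mem_univ _, hi⟩⟩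
  set i0 : Fin (k - 2) := sc.min' hscne with hi0
  set i1 : Fin (k - 2) := sc.max' hscne with hi1
  have hci0 : c i0 ≠ 0 := (Finset.mem_filter.mp (sc.min'_mem hscne)).2
  have hci1 : c i1 ≠ 0 := (Finset.mem_filter.mp (sc.max'_mem hscne)).2
  have hmin : ∀ i : Fin (k - 2), (i : ℕ) < (i0 : ℕ) → c i = 0 := by
    intro i h
    by_contra hci
    have := Finset.min'_le sc i (Finset.mem_filter.mpr ⟨Finset.mem_univ _, hci⟩)
    rw [Fin.le_def] at this
    omega
  have hmax : ∀ i : Fin (k - 2), (i1 : ℕ) < (i : ℕ) → c i = 0 := by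
    intro i h
    by_contra hci
    have := Finset.le_max' sc i (Finset.mem_filter.mpr ⟨Finset.mem_univ _, hci⟩)
    rw [Fin.le_def] at this
    omega
  have h01 : (i0 : ℕ) ≤ (i1 : ℕ) := by
    have := sc.min'_le i1 (sc.max'_mem hscne)
    rwa [Fin.le_def] at this
  have h0k : (i0 : ℕ) < k := by have := i0.isLt; omega
  have hvj0 : v ⟨(i0 : ℕ), h0k⟩ = c i0 := by
    simp only [hv]
    rw [Finset.sum_eq_single_of_mem i0 (Finset.mem_univ _)]
    · rw [hA, if_pos rfl, mul_one]
    · intro i _ hne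
      have hne' : (i : ℕ) ≠ (i0 : ℕ) := fun h => hne (Fin.ext h)
      rcases hne'.lt_or_gt with h | h
      · rw [hmin i h, zero_mul]
      · rw [hA, if_neg (by simp only [Fin.val_mk]; omega),
            if_neg (by simp only [Fin.val_mk]; omega),
            if_neg (by simp only [Fin.val_mk]; omega), mul_zero]
  have hvj2 : v ⟨(i1 : ℕ) + 2, hbound i1⟩ = c i1 := by
    simp only [hv]
    rw [Finset.sum_eq_single_of_mem i1 (Finset.mem_univ _)]
    · rw [hA, if_neg (by simp only [Fin.val_mk]; omega),
          if_neg (by simp only [Fin.val_mk]; omega), if_pos rfl, mul_one]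
    · intro i _ hne
      have hne' : (i : ℕ) ≠ (i1 : ℕ) := fun h => hne (Fin.ext h)
      rcases hne'.lt_or_gt with h | h
      · rw [hA, if_neg (by simp only [Fin.val_mk]; omega),
            if_neg (by simp only [Fin.val_mk]; omega),
            if_neg (by simp only [Fin.val_mk]; omega), mul_zero]
      · rw [hmax i h, zero_mul]
  set j0 : Fin k := ⟨(i0 : ℕ), h0k⟩ with hj0
  set j2 : Fin k := ⟨(i1 : ℕ) + 2, hbound i1⟩ with hj2
  have hne02 : j0 ≠ j2 := by
    intro h
    have := congrArg Fin.val h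
    simp only [hj0, hj2, Fin.val_mk] at this
    omega
  set s : Finset (Fin k) := Finset.univ.filter (fun j => v j ≠ 0) with hs
  by_contra hlt
  push_neg at hlt
  have hcard : s.card ≤ 2 := by omega
  have hsub : ({j0, j2} : Finset (Fin k)) ⊆ s := by
    intro j hj
    rcases Finset.mem_insert.mp hj with h | h
    · subst h; exact Finset.mem_filter.mpr ⟨Finset.mem_univ _, by rw [hvj0]; exact hci0⟩
    · rw [Finset.mem_singleton] at h
      subst h; exact Finset.mem_filter.mpr ⟨Finset.mem_univ _, by rw [hvj2]; exact hci1⟩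
  have hpaircard : ({j0, j2} : Finset (Fin k)).card = 2 := Finset.card_pair hne02
  have hseq : ({j0, j2} : Finset (Fin k)) = s :=
    Finset.eq_of_subset_of_card_le hsub (by omega)
  have e1 : v j0 + v j2 = 0 := by
    have h1 : ∑ j ∈ s, v j = ∑ j, v j := by
      apply Finset.sum_subset (Finset.filter_subset _ _)
      intro j _ hj
      have := Finset.mem_filter.not.mp hj
      push_neg at this
      exact this (Finset.mem_univ _)
    rw [← hseq, Finset.sum_pair hne02] at h1
    rw [h1, S0]
  have e2 : ((j0 : ℕ) : ℚ) * v j0 + ((j2 : ℕ) : ℚ) * v j2 = 0 := by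
    have h1 : ∑ j ∈ s, ((j : ℕ) : ℚ) * v j = ∑ j : Fin k, ((j : ℕ) : ℚ) * v j := by
      apply Finset.sum_subset (Finset.filter_subset _ _)
      intro j _ hj
      have := Finset.mem_filter.not.mp hj
      push_neg at this
      rw [this (Finset.mem_univ _), mul_zero]
    rw [← hseq, Finset.sum_pair hne02] at h1
    rw [h1, S1]
  rw [hvj0, hvj2] at e1 e2
  have hj0v : ((j0 : ℕ) : ℚ) = ((i0 : ℕ) : ℚ) := by rw [hj0]
  have hj2v : ((j2 : ℕ) : ℚ) = ((i1 : ℕ) : ℚ) + 2 := by rw [hj2]; push_cast; ring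
  rw [hj0v, hj2v] at e2
  have hle : ((i0 : ℕ) : ℚ) ≤ ((i1 : ℕ) : ℚ) := by exact_mod_cast h01
  have h3 : (((i1 : ℕ) : ℚ) + 2 - ((i0 : ℕ) : ℚ)) * c i1 = 0 := by
    linear_combination e2 - ((i0 : ℕ) : ℚ) * e1
  rcases mul_eq_zero.mp h3 with h | h
  · linarith
  · exact hci1 h
end
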